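/- arXiv:2505.04872 — 5 statements merged into one kernel-verified Lean document; each statement's English description precedes it below -/
import Mathlib

section
/- Let R be a commutative noetherian ring and let 0 → L → M → N → 0 be an exact sequence of finitely generated R-modules. Let X be a class of finitely generated R-modules, and suppose L and N each belong to the additive closure of X (i.e., each is a direct summand of a finite direct sum of modules from X). Then there exists an exact sequence 0 → A → B → C → 0 of R-modules such that A and C are finite direct sums of modules in X and M is a direct summand of B. -/
open CategoryTheory

universe u

section Defs

variable (R : Type u) [CommRing R]

/-- `N` is a direct summand of `M`. -/
def IsSummand (N M : ModuleCat.{u} R) : Prop :=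
  ∃ (s : N →ₗ[R] M) (r : M →ₗ[R] N), r ∘ₗ s = LinearMap.id

/-- The finite direct sum of a finite family of modules. -/
def finSum {n : ℕ} (f : Fin n → ModuleCat.{u} R) : ModuleCat.{u} R :=
  ModuleCat.of R (∀ i, f i)

/-- The additive closure `add X` of a class `X` of modules: all direct summands of
finite direct sums of modules in `X`. -/
def addClosure (X : Set (ModuleCat.{u} R)) : Set (ModuleCat.{u} R) :=
  {M | ∃ (n : ℕ) (f : Fin n → ModuleCat.{u} R),
    (∀ i, f i ∈ X) ∧ IsSummand R M (finSum R f)}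

/-- A class of modules is extension closed if it is closed under direct summands and
under extensions. -/
def IsExtClosed (S : Set (ModuleCat.{u} R)) : Prop :=
  (∀ M N : ModuleCat.{u} R, M ∈ S → IsSummand R N M → N ∈ S) ∧
  (∀ (A B C : ModuleCat.{u} R) (f : A →ₗ[R] B) (g : B →ₗ[R] C),
    Function.Injective f → Function.Exact f g → Function.Surjective g →
    A ∈ S → C ∈ S → B ∈ S)

/-- The extension closure `ext X`: the smallest class containing `X` that is closed
under direct summands and extensions. -/
def extClosure (X : Set (ModuleCat.{u} R)) : Set (ModuleCat.{u} R) :=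
  ⋂₀ {S | X ⊆ S ∧ IsExtClosed R S}

end Defs

/-- Lemma 2.9(1): given an exact sequence `0 → L → M → N → 0` of finitely generated
modules over a noetherian ring with `L, N ∈ add X`, there is an exact sequence
`0 → A → B → C → 0` with `A, C` finite direct sums of modules in `X` and `M` a
direct summand of `B`. -/
theorem add_closure_extension {R : Type u} [CommRing R] [IsNoetherianRing R]
    (X : Set (ModuleCat.{u} R)) (hX : ∀ M ∈ X, Module.Finite R M)
    (L M N : ModuleCat.{u} R)
    (hLfin : Module.Finite R L) (hMfin : Module.Finite R M) (hNfin : Module.Finite R N)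
    (i : L →ₗ[R] M) (p : M →ₗ[R] N)
    (hinj : Function.Injective i) (hex : Function.Exact i p)
    (hsurj : Function.Surjective p)
    (hL : L ∈ addClosure R X) (hN : N ∈ addClosure R X) :
    ∃ (A B C : ModuleCat.{u} R) (i' : A →ₗ[R] B) (p' : B →ₗ[R] C),
      Function.Injective i' ∧ Function.Exact i' p' ∧ Function.Surjective p' ∧
      (∃ (n : ℕ) (f : Fin n → ModuleCat.{u} R),
        (∀ j, f j ∈ X) ∧ Nonempty (A ≃ₗ[R] finSum R f)) ∧
      (∃ (n : ℕ) (f : Fin n → ModuleCat.{u} R),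
        (∀ j, f j ∈ X) ∧ Nonempty (C ≃ₗ[R] finSum R f)) ∧
      IsSummand R M B := by
  obtain ⟨nA, f, hf, sL, rL, hrsL⟩ := hL
  obtain ⟨nC, g, hg, sN, rN, hrsN⟩ := hN
  have hrsL' : ∀ x, rL (sL x) = x := fun x => LinearMap.congr_fun hrsL x
  have hrsN' : ∀ x, rN (sN x) = x := fun x => LinearMap.congr_fun hrsN x
  have hmem : ∀ a : finSum R f,
      ((LinearMap.id : finSum R f →ₗ[R] finSum R f) - sL ∘ₗ rL) a ∈ LinearMap.ker rL := by
    intro a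
    simp [LinearMap.mem_ker, map_sub, hrsL']
  set B : ModuleCat.{u} R :=
    ModuleCat.of R (M × (LinearMap.ker rL × LinearMap.ker rN)) with hB
  set i' : finSum R f →ₗ[R] B :=
    LinearMap.prod (i ∘ₗ rL)
      (LinearMap.prod
        (((LinearMap.id : finSum R f →ₗ[R] finSum R f) - sL ∘ₗ rL).codRestrict
          (LinearMap.ker rL) hmem) 0)
    with hi'
  set p' : B →ₗ[R] finSum R g :=
    (sN ∘ₗ p) ∘ₗ LinearMap.fst R M (LinearMap.ker rL × LinearMap.ker rN) +
      (LinearMap.ker rN).subtype ∘ₗ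
        (LinearMap.snd R (LinearMap.ker rL) (LinearMap.ker rN)) ∘ₗ
        (LinearMap.snd R M (LinearMap.ker rL × LinearMap.ker rN))
    with hp'
  have hi'app : ∀ a : finSum R f, i' a = (i (rL a), ⟨a - sL (rL a), hmem a⟩, 0) := by
    intro a
    rfl
  have hp'app : ∀ b : M × (LinearMap.ker rL × LinearMap.ker rN),
      p' b = sN (p b.1) + (b.2.2 : finSum R g) := by
    intro b
    rfl
  refine ⟨finSum R f, B, finSum R g, i', p', ?_, ?_, ?_, ?_, ?_, ?_⟩
  · -- injectivity
    intro a₁ a₂ h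
    rw [hi'app, hi'app] at h
    have h1 : i (rL a₁) = i (rL a₂) := congrArg Prod.fst h
    have h2 : a₁ - sL (rL a₁) = a₂ - sL (rL a₂) :=
      congrArg Subtype.val (congrArg Prod.fst (congrArg Prod.snd h))
    have h3 : rL a₁ = rL a₂ := hinj h1
    rw [h3] at h2
    exact sub_left_injective h2
  · -- exactness
    intro b
    constructor
    · intro hb
      obtain ⟨m, k, k'⟩ := b
      rw [hp'app] at hb
      have h0 := congrArg rN hb
      rw [map_add, hrsN', LinearMap.mem_ker.mp k'.2, add_zero, map_zero] at h0
      have hk' : (k' : finSum R g) = 0 := by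
        rw [h0, map_zero, zero_add] at hb
        exact hb
      obtain ⟨l, hl⟩ := (hex m).mp h0
      refine ⟨sL l + (k : finSum R f), ?_⟩
      rw [hi'app]
      have hrlk : rL (k : finSum R f) = 0 := LinearMap.mem_ker.mp k.2
      have h1 : rL (sL l + (k : finSum R f)) = l := by
        simp [map_add, hrsL', hrlk]
      refine Prod.ext ?_ (Prod.ext ?_ ?_)
      · simpa [h1] using hl
      · apply Subtype.ext
        simp [h1]
      · exact (Subtype.ext hk'.symm : (0 : LinearMap.ker rN) = k')
    · rintro ⟨a, rfl⟩
      rw [hi'app, hp'app]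
      have : p (i (rL a)) = 0 := hex.apply_apply_eq_zero (rL a)
      simp [this]
  · -- surjectivity
    intro c
    obtain ⟨m, hm⟩ := hsurj (rN c)
    have hmem2 : c - sN (rN c) ∈ LinearMap.ker rN := by
      simp [LinearMap.mem_ker, map_sub, hrsN']
    refine ⟨(m, 0, ⟨c - sN (rN c), hmem2⟩), ?_⟩
    rw [hp'app]
    simp [hm]
  · exact ⟨nA, f, hf, ⟨LinearEquiv.refl R (finSum R f)⟩⟩
  · exact ⟨nC, g, hg, ⟨LinearEquiv.refl R (finSum R g)⟩⟩
  · -- M is a summand of B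
    refine ⟨LinearMap.prod LinearMap.id 0, LinearMap.fst R M _, ?_⟩
    ext m
    rfl
end

section
/- Let R be a commutative noetherian ring, let M and N be finitely generated R-modules, and let S be a multiplicatively closed subset of R. If M belongs to the extension closure of N in the category of finitely generated R-modules, then the localization M_S belongs to the extension closure of N_S in the category of finitely generated R_S-modules. -/
open CategoryTheory

universe u

section Aux

variable {R : Type u} [CommRing R]

lemma subset_extClosure (X : Set (ModuleCat.{u} R)) : X ⊆ extClosure R X := by
  intro P hP T hT
  exact hT.1 hP

lemma extClosure_isExtClosed (X : Set (ModuleCat.{u} R)) : IsExtClosed R (extClosure R X) := by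
  constructor
  · intro P Q hP hPQ T hT
    exact hT.2.1 P Q (hP T hT) hPQ
  · intro A B C f g hf hfg hg hA hC T hT
    exact hT.2.2 A B C f g hf hfg hg (hA T hT) (hC T hT)

lemma locMap_comp (S : Submonoid R) {P Q V : Type u} [AddCommMonoid P] [Module R P]
    [AddCommMonoid Q] [Module R Q] [AddCommMonoid V] [Module R V]
    (s : P →ₗ[R] Q) (r : Q →ₗ[R] V) :
    LocalizedModule.map S r ∘ₗ LocalizedModule.map S s = LocalizedModule.map S (r ∘ₗ s) := by
  ext x
  induction x using LocalizedModule.induction_on with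
  | h m t => simp

end Aux

/-- Lemma 2.9(2): if `M` belongs to the extension closure of `N` in `mod R`,
then the localization `M_S` belongs to the extension closure of `N_S` in `mod R_S`. -/
theorem localization_mem_extClosure {R : Type u} [CommRing R] [IsNoetherianRing R]
    (M N : ModuleCat.{u} R)
    (hMfin : Module.Finite R M) (hNfin : Module.Finite R N)
    (S : Submonoid R)
    (h : M ∈ extClosure R {N}) :
    ModuleCat.of (Localization S) (LocalizedModule S M) ∈
      extClosure (Localization S)
        {ModuleCat.of (Localization S) (LocalizedModule S N)} := by
  set A := Localization S
  set T : Set (ModuleCat.{u} R) :=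
    {P | ModuleCat.of A (LocalizedModule S P) ∈
      extClosure A {ModuleCat.of A (LocalizedModule S N)}} with hT
  have hsub : ({N} : Set (ModuleCat.{u} R)) ⊆ T := by
    intro P hP
    rw [Set.mem_singleton_iff] at hP
    subst hP
    exact subset_extClosure _ rfl
  have hclosed : IsExtClosed R T := by
    constructor
    · rintro P Q hP ⟨s, r, hrs⟩
      refine (extClosure_isExtClosed _).1 _ _ hP ?_
      refine ⟨LocalizedModule.map S s, LocalizedModule.map S r, ?_⟩
      rw [locMap_comp, hrs, LocalizedModule.map_id]
    · intro A' B C f g hf hfg hg hA hC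
      refine (extClosure_isExtClosed _).2 _ _ _
        (LocalizedModule.map S f) (LocalizedModule.map S g)
        ?_ ?_ ?_ hA hC
      · exact LocalizedModule.map_injective S f hf
      · exact LocalizedModule.map_exact S f g hfg
      · exact LocalizedModule.map_surjective S g hg
  exact h T ⟨hsub, hclosed⟩
end

section
/- Let S be a local ring, let x, y be a regular sequence on S, and set R = S/(xy). Then in R the annihilator of x equals the ideal generated by y, and the annihilator of y equals the ideal generated by x; consequently the sequence ⋯ → R →(multiplication by y) R →(multiplication by x) R → R/xR → 0 is an exact (free) resolution of R/xR. -/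
universe u

open Pointwise in
/-- Lemma 2.14 (key computation): if `x, y` is a regular sequence on a local ring `S`
and `R = S/(xy)`, then in `R` the annihilator of `x` is `(y)`, the annihilator of `y`
is `(x)`, and consequently `⋯ → R →(y·) R →(x·) R → R/xR → 0` is an exact free
resolution of `R/xR`. -/
theorem ann_and_periodic_resolution {S : Type u} [CommRing S] [IsNoetherianRing S]
    [IsLocalRing S] (x y : S)
    (hreg : RingTheory.Sequence.IsRegular S [x, y]) :
    letI R : Type u := S ⧸ Ideal.span {x * y}
    letI x' : R := Ideal.Quotient.mk (Ideal.span {x * y}) x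
    letI y' : R := Ideal.Quotient.mk (Ideal.span {x * y}) y
    (∀ r : R, r * x' = 0 ↔ r ∈ Ideal.span {y'}) ∧
    (∀ r : R, r * y' = 0 ↔ r ∈ Ideal.span {x'}) ∧
    Function.Exact (LinearMap.lsmul R R y') (LinearMap.lsmul R R x') ∧
    Function.Exact (LinearMap.lsmul R R x') (LinearMap.lsmul R R y') ∧
    Function.Exact (LinearMap.lsmul R R x') (Ideal.span {x'}).mkQ ∧
    Function.Surjective (Ideal.span {x'}).mkQ := by
  -- extract regularity facts
  have h := hreg.toIsWeaklyRegular
  rw [RingTheory.Sequence.isWeaklyRegular_cons_iff] at h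
  obtain ⟨hx, h2⟩ := h
  rw [RingTheory.Sequence.isWeaklyRegular_cons_iff] at h2
  obtain ⟨hy, -⟩ := h2
  -- y is regular mod x
  have key : ∀ s c : S, s * y = c * x → ∃ m, s = x * m := by
    intro s c hsc
    have hmem : c * x ∈ (x • ⊤ : Submodule S S) := by
      rw [mul_comm]
      exact Submodule.smul_mem_pointwise_smul c x ⊤ trivial
    have h0 : y • (Submodule.Quotient.mk s : QuotSMulTop x S) = y • 0 := by
      rw [smul_zero, ← Submodule.Quotient.mk_smul, smul_eq_mul, mul_comm y s, hsc,
        Submodule.Quotient.mk_eq_zero]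
      exact hmem
    have := hy h0
    rw [Submodule.Quotient.mk_eq_zero] at this
    have h3 : s ∈ x • ((⊤ : Submodule S S) : Set S) := by
      rw [← Submodule.coe_pointwise_smul]; exact this
    obtain ⟨m, -, hm⟩ := Set.mem_smul_set.mp h3
    exact ⟨m, by rw [← hm, smul_eq_mul]⟩
  have mk_surj := Ideal.Quotient.mk_surjective (I := Ideal.span {x * y})
  -- annihilator of (Ideal.Quotient.mk (Ideal.span {x * y}) x) is ((Ideal.Quotient.mk (Ideal.span {x * y}) y))
  have hxann : ∀ r : S ⧸ Ideal.span {x * y}, r * (Ideal.Quotient.mk (Ideal.span {x * y}) x) = 0 ↔ r ∈ Ideal.span {(Ideal.Quotient.mk (Ideal.span {x * y}) y)} := by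
    intro r
    obtain ⟨s, rfl⟩ := mk_surj r
    constructor
    · intro hr
      rw [← map_mul, Ideal.Quotient.eq_zero_iff_mem, Ideal.mem_span_singleton] at hr
      obtain ⟨c, hc⟩ := hr
      have hs : s = y * c := hx (show x • s = x • (y * c) by
        simp only [smul_eq_mul]; rw [mul_comm x s, hc]; ring)
      rw [Ideal.mem_span_singleton]
      exact ⟨Ideal.Quotient.mk _ c, by rw [hs, map_mul]⟩
    · intro hr
      rw [Ideal.mem_span_singleton] at hr
      obtain ⟨c, hc⟩ := hr
      obtain ⟨d, rfl⟩ := mk_surj c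
      rw [hc, ← map_mul, ← map_mul, Ideal.Quotient.eq_zero_iff_mem,
        Ideal.mem_span_singleton]
      exact ⟨d, by ring⟩
  -- annihilator of (Ideal.Quotient.mk (Ideal.span {x * y}) y) is ((Ideal.Quotient.mk (Ideal.span {x * y}) x))
  have hyann : ∀ r : S ⧸ Ideal.span {x * y}, r * (Ideal.Quotient.mk (Ideal.span {x * y}) y) = 0 ↔ r ∈ Ideal.span {(Ideal.Quotient.mk (Ideal.span {x * y}) x)} := by
    intro r
    obtain ⟨s, rfl⟩ := mk_surj r
    constructor
    · intro hr
      rw [← map_mul, Ideal.Quotient.eq_zero_iff_mem, Ideal.mem_span_singleton] at hr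
      obtain ⟨c, hc⟩ := hr
      obtain ⟨m, hm⟩ := key s (y * c) (by rw [hc]; ring)
      rw [Ideal.mem_span_singleton]
      exact ⟨Ideal.Quotient.mk _ m, by rw [hm, map_mul]⟩
    · intro hr
      rw [Ideal.mem_span_singleton] at hr
      obtain ⟨c, hc⟩ := hr
      obtain ⟨d, rfl⟩ := mk_surj c
      rw [hc, ← map_mul, ← map_mul, Ideal.Quotient.eq_zero_iff_mem,
        Ideal.mem_span_singleton]
      exact ⟨d, by ring⟩
  refine ⟨hxann, hyann, ?_, ?_, ?_, Submodule.mkQ_surjective _⟩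
  · intro r
    rw [LinearMap.lsmul_apply, smul_eq_mul]
    rw [show (Ideal.Quotient.mk (Ideal.span {x * y}) x) * r
        = r * (Ideal.Quotient.mk (Ideal.span {x * y}) x) from mul_comm _ _,
      hxann r, Ideal.mem_span_singleton]
    constructor
    · rintro ⟨c, rfl⟩
      exact ⟨c, by simp [mul_comm]⟩
    · rintro ⟨c, rfl⟩
      exact ⟨c, by simp [mul_comm]⟩
  · intro r
    rw [LinearMap.lsmul_apply, smul_eq_mul]
    rw [show (Ideal.Quotient.mk (Ideal.span {x * y}) y) * r
        = r * (Ideal.Quotient.mk (Ideal.span {x * y}) y) from mul_comm _ _,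
      hyann r, Ideal.mem_span_singleton]
    constructor
    · rintro ⟨c, rfl⟩
      exact ⟨c, by simp [mul_comm]⟩
    · rintro ⟨c, rfl⟩
      exact ⟨c, by simp [mul_comm]⟩
  · intro r
    rw [Submodule.mkQ_apply, Submodule.Quotient.mk_eq_zero, Ideal.mem_span_singleton]
    constructor
    · rintro ⟨c, rfl⟩
      exact ⟨c, by simp [mul_comm]⟩
    · rintro ⟨c, rfl⟩
      exact ⟨c, by simp [mul_comm]⟩
end

section
/- Let R = k[[x,y,z]]/(xy) where k is a field. For positive integers i, let I_i = (x, z^i)R and J_i = (y, z^i)R. Then for every i ≥ 1 there are short exact sequences of R-modules exhibiting that R belongs to the extension closure of I_1, and I_i ⊕ I_i sits in an extension relating I_(i-1) and I_(i+1); concretely, for each i ≥ 1 there is a short exact sequence 0 → I_i → I_(i+1) ⊕ I_(i-1) → I_i → 0, where I_0 := R. -/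
open CategoryTheory MvPowerSeries

universe u

/-- The two-dimensional `A_∞` hypersurface singularity `k[[x,y,z]]/(xy)`. -/
abbrev AInf (k : Type u) [Field k] : Type u :=
  MvPowerSeries (Fin 3) k ⧸
    Ideal.span {(X 0 : MvPowerSeries (Fin 3) k) * (X 1 : MvPowerSeries (Fin 3) k)}

/-- The projection `k[[x,y,z]] → k[[x,y,z]]/(xy)`. -/
noncomputable abbrev aInfMk (k : Type u) [Field k] :
    MvPowerSeries (Fin 3) k →+* AInf k :=
  Ideal.Quotient.mk _

/-- The images of `x`, `y`, `z` in `R = k[[x,y,z]]/(xy)`. -/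
noncomputable abbrev xA (k : Type u) [Field k] : AInf k := aInfMk k (X 0)
noncomputable abbrev yA (k : Type u) [Field k] : AInf k := aInfMk k (X 1)
noncomputable abbrev zA (k : Type u) [Field k] : AInf k := aInfMk k (X 2)

/-- The ideal `I_l = (x, z^l)R` for `l ≥ 1`. -/
noncomputable abbrev IIdeal (k : Type u) [Field k] (l : ℕ) : Ideal (AInf k) :=
  Ideal.span {xA k, zA k ^ l}

/-- The ideal `J_l = (y, z^l)R` for `l ≥ 1`. -/
noncomputable abbrev JIdeal (k : Type u) [Field k] (l : ℕ) : Ideal (AInf k) :=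
  Ideal.span {yA k, zA k ^ l}

/-- The module `I_l`, with the convention `I_0 = R`. -/
noncomputable def IMod (k : Type u) [Field k] (l : ℕ) : ModuleCat.{u} (AInf k) :=
  if l = 0 then ModuleCat.of (AInf k) (AInf k) else ModuleCat.of (AInf k) (IIdeal k l)

/-!
Multiplication by `z` and inclusion give `f : I_i → I_(i+1) × I_(i-1)`, `b ↦ (z b, b)`, and
`g : I_(i+1) × I_(i-1) → I_i`, `(a, c) ↦ a - z c`. Surjectivity of `g` is
`I_i = I_(i+1) + z I_(i-1)`, and exactness in the middle is the colon identity
`(I_(i+1) : z) = I_i`, which holds because `z` is a nonzerodivisor modulo `x`: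
this is a coefficient computation in `k[[x,y,z]]`, where `(xy) ⊆ I_(i+1)`.
-/

section ShortExact

variable {R : Type*} [CommRing R]

theorem exists_shortExact_of_linearEquiv {M N P M' N' P' : Type*}
    [AddCommGroup M] [AddCommGroup N] [AddCommGroup P]
    [AddCommGroup M'] [AddCommGroup N'] [AddCommGroup P']
    [Module R M] [Module R N] [Module R P] [Module R M'] [Module R N'] [Module R P']
    (eM : M ≃ₗ[R] M') (eN : N ≃ₗ[R] N') (eP : P ≃ₗ[R] P')
    (f : M →ₗ[R] N) (g : N →ₗ[R] P)
    (hf : Function.Injective f) (hfg : Function.Exact f g) (hg : Function.Surjective g) :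
    ∃ (f' : M' →ₗ[R] N') (g' : N' →ₗ[R] P'),
      Function.Injective f' ∧ Function.Exact f' g' ∧ Function.Surjective g' := by
  refine ⟨eN ∘ₗ f ∘ₗ eM.symm, eP ∘ₗ g ∘ₗ eN.symm, ?_, ?_, ?_⟩
  · simpa using eN.injective.comp (hf.comp eM.symm.injective)
  · exact Function.Exact.of_ladder_linearEquiv_of_exact (e₁ := eM) (e₂ := eN) (e₃ := eP)
      (by ext; simp) (by ext; simp) hfg
  · simpa using eP.surjective.comp (hg.comp eN.symm.surjective)

theorem Ideal.exists_shortExact_mul_sub (z : R) {A B C : Ideal R} (hAB : A ≤ B) (hBC : B ≤ C)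
    (hzB : ∀ b ∈ B, z * b ∈ A) (hzC : ∀ c ∈ C, z * c ∈ B)
    (hcolon : ∀ c ∈ C, z * c ∈ A → c ∈ B) (hB : B ≤ A ⊔ Ideal.span {z} * C) :
    ∃ (f : B →ₗ[R] A × C) (g : A × C →ₗ[R] B),
      Function.Injective f ∧ Function.Exact f g ∧ Function.Surjective g := by
  let f : B →ₗ[R] A × C :=
    (LinearMap.codRestrict A (z • B.subtype) fun b ↦ hzB b b.2).prod (Submodule.inclusion hBC)
  let g : A × C →ₗ[R] B :=
    LinearMap.codRestrict B
      (A.subtype ∘ₗ LinearMap.fst R A C - z • (C.subtype ∘ₗ LinearMap.snd R A C)) fun p ↦ B.sub_mem (hAB p.1.2) (hzC p.2 p.2.2)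
  refine ⟨f, g, fun b b' h ↦ Submodule.inclusion_injective hBC (congrArg Prod.snd h), ?_, ?_⟩
  · rintro ⟨a, c⟩
    constructor
    · intro h
      have ha : (a : R) = z * c := sub_eq_zero.mp (congrArg Subtype.val h)
      exact ⟨⟨c, hcolon c c.2 (ha ▸ a.2)⟩, Prod.ext (Subtype.ext ha.symm) rfl⟩
    · rintro ⟨b, hb⟩
      rw [← hb]
      exact Subtype.ext (sub_self (z * b))
  · rintro ⟨b, hb⟩
    obtain ⟨a, ha, zc, hzc, rfl⟩ := Submodule.mem_sup.mp (hB hb)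
    obtain ⟨c, hc, rfl⟩ := Ideal.mem_span_singleton_mul.mp hzc
    exact ⟨(⟨a, ha⟩, ⟨-c, C.neg_mem hc⟩), Subtype.ext (by simp [g, sub_eq_add_neg])⟩

end ShortExact

section SpanPairPow

variable {R : Type*} [CommRing R] (x z : R)

theorem span_pair_pow_succ_le (l : ℕ) :
    Ideal.span {x, z ^ (l + 1)} ≤ Ideal.span {x, z ^ l} := by
  rw [Ideal.span_le, Set.insert_subset_iff, Set.singleton_subset_iff, pow_succ]
  exact ⟨Ideal.subset_span (Set.mem_insert _ _),
    Ideal.mul_mem_right _ _ (Ideal.subset_span (Set.mem_insert_of_mem _ rfl))⟩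

variable {x z} in
theorem mul_mem_span_pair_pow_succ {l : ℕ} {c : R} (hc : c ∈ Ideal.span {x, z ^ l}) :
    z * c ∈ Ideal.span {x, z ^ (l + 1)} := by
  obtain ⟨u, v, rfl⟩ := Ideal.mem_span_pair.mp hc
  exact Ideal.mem_span_pair.mpr ⟨z * u, v, by ring⟩

theorem span_pair_pow_succ_le_sup (l : ℕ) :
    Ideal.span {x, z ^ (l + 1)} ≤
      Ideal.span {x, z ^ (l + 2)} ⊔ Ideal.span {z} * Ideal.span {x, z ^ l} := by
  have hz : z ^ (l + 1) ∈ Ideal.span {z} * Ideal.span {x, z ^ l} := by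
    rw [pow_succ']
    exact Ideal.mul_mem_mul (Ideal.mem_span_singleton_self z)
      (Ideal.subset_span (Set.mem_insert_of_mem _ rfl))
  rw [Ideal.span_le, Set.insert_subset_iff, Set.singleton_subset_iff]
  exact ⟨Ideal.mem_sup_left (Ideal.subset_span (Set.mem_insert _ _)), Ideal.mem_sup_right hz⟩

end SpanPairPow

namespace MvPowerSeries

variable {σ R : Type*} [CommRing R]

/-- The quotient by `X t ^ i` is read off the coefficients of `C` at monomials free of `X s`. -/
theorem mem_span_X_X_pow_of_X_mul_mem {s t : σ} (hst : s ≠ t) {i : ℕ}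
    {C : MvPowerSeries σ R} (h : X t * C ∈ Ideal.span {X s, X t ^ (i + 1)}) :
    C ∈ Ideal.span {X s, X t ^ i} := by
  classical
  obtain ⟨P, Q, hPQ⟩ := Ideal.mem_span_pair.mp h
  have hlow : ∀ m : σ →₀ ℕ, m s = 0 → m t < i → coeff m C = 0 := by
    intro m hms hmt
    have hXs : coeff (Finsupp.single t 1 + m) (P * X s) = 0 :=
      X_dvd_iff.mp (Dvd.intro_left P rfl) _ (by simp [hst.symm, hms])
    have hXt : coeff (Finsupp.single t 1 + m) (Q * X t ^ (i + 1)) = 0 :=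
      X_pow_dvd_iff.mp (Dvd.intro_left Q rfl) _ (by simp; omega)
    have := congrArg (coeff (Finsupp.single t 1 + m)) hPQ
    rwa [map_add, hXs, hXt, zero_add, X_def, coeff_add_monomial_mul, one_mul, eq_comm] at this
  let B : MvPowerSeries σ R := fun n ↦ if n s = 0 then coeff (n + Finsupp.single t i) C else 0
  have hB : ∀ n, coeff n B = if n s = 0 then coeff (n + Finsupp.single t i) C else 0 :=
    fun _ ↦ rfl
  obtain ⟨A, hA⟩ : X s ∣ C - B * X t ^ i := by
    refine X_dvd_iff.mpr fun m hms ↦ ?_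
    rw [map_sub, X_pow_eq, coeff_mul_monomial, mul_one]
    by_cases hle : Finsupp.single t i ≤ m
    · have : (m - Finsupp.single t i) s = 0 := by simp [hms]
      rw [if_pos hle, hB, if_pos this, tsub_add_cancel_of_le hle, sub_self]
    · rw [if_neg hle, sub_zero]
      exact hlow m hms (by simpa using Finsupp.single_le_iff.not.mp hle)
  exact Ideal.mem_span_pair.mpr ⟨A, B, by linear_combination -hA⟩

end MvPowerSeries

theorem IIdeal_eq_map {k : Type u} [Field k] (l : ℕ) :
    IIdeal k l = (Ideal.span {(X 0 : MvPowerSeries (Fin 3) k), X 2 ^ l}).map (aInfMk k) := by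
  rw [Ideal.map_span, Set.image_insert_eq, Set.image_singleton, map_pow]

theorem mem_IIdeal_of_zA_mul_mem {k : Type u} [Field k] {l : ℕ} {c : AInf k} (h : zA k * c ∈ IIdeal k (l + 1)) :
    c ∈ IIdeal k l := by
  obtain ⟨C, rfl⟩ := Ideal.Quotient.mk_surjective c
  have hxy : Ideal.span {(X 0 : MvPowerSeries (Fin 3) k) * X 1} ≤
      Ideal.span {X 0, X 2 ^ (l + 1)} :=
    Ideal.span_le.mpr <| Set.singleton_subset_iff.mpr <|
      Ideal.mul_mem_right _ _ (Ideal.subset_span (Set.mem_insert _ _))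
  rw [IIdeal_eq_map, ← map_mul, Ideal.mem_quotient_iff_mem hxy] at h
  rw [IIdeal_eq_map]
  exact Ideal.mem_map_of_mem _ (MvPowerSeries.mem_span_X_X_pow_of_X_mul_mem (by decide) h)

/-- `I_0 = (x, 1)R` is the unit ideal, matching the convention `IMod k 0 = R`. -/
noncomputable def IMod.equivIIdeal (k : Type u) [Field k] : (l : ℕ) → IMod k l ≃ₗ[AInf k] IIdeal k l
  | 0 => Submodule.topEquiv.symm.trans <| LinearEquiv.ofEq _ _ <| Eq.symm <|
      Ideal.eq_top_of_isUnit_mem _ (Ideal.subset_span (Set.mem_insert_of_mem _ rfl)) <| by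
        simp
  | _ + 1 => LinearEquiv.refl _ _

/-- Part of Theorem 4.2: for `R = k[[x,y,z]]/(xy)` and the ideals `I_i = (x, z^i)R`
(with `I_0 = R`), for every `i ≥ 1` there is a short exact sequence
`0 → I_i → I_(i+1) ⊕ I_(i-1) → I_i → 0`. -/
theorem aInf_exact_sequences (k : Type u) [Field k] :
    ∀ i : ℕ, 1 ≤ i →
      ∃ (f : IMod k i →ₗ[AInf k] (IMod k (i + 1) × IMod k (i - 1)))
        (g : (IMod k (i + 1) × IMod k (i - 1)) →ₗ[AInf k] IMod k i),
        Function.Injective f ∧ Function.Exact f g ∧ Function.Surjective g := by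
  intro i hi
  obtain ⟨j, rfl⟩ := Nat.exists_eq_add_of_le' hi
  obtain ⟨f, g, hf, hfg, hg⟩ := Ideal.exists_shortExact_mul_sub (zA k)
    (span_pair_pow_succ_le _ _ (j + 1)) (span_pair_pow_succ_le _ _ j)
    (fun _ ↦ mul_mem_span_pair_pow_succ) (fun _ ↦ mul_mem_span_pair_pow_succ)
    (fun _ _ ↦ mem_IIdeal_of_zA_mul_mem)
    (span_pair_pow_succ_le_sup _ _ j)
  have e := IMod.equivIIdeal k
  exact exists_shortExact_of_linearEquiv (e (j + 1)).symm ((e (j + 2)).symm.prodCongr (e j).symm)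
    (e (j + 1)).symm f g hf hfg hg
end

section
/- Let R = k[[x,y,z]]/(xy) and for l ≥ 1 let A_l denote the 2×2 matrix (y, -z^l; 0, x) over R. Let N be an R-module fitting in a short exact sequence 0 → I_(l_1) ⊕ ⋯ ⊕ I_(l_r) → N → I_1 → 0, where I_l = (x, z^l)R. Then N is isomorphic to the cokernel of the block upper-triangular matrix D(u_1,…,u_r) with diagonal blocks A_(l_1), …, A_(l_r), A_1 and off-diagonal blocks U_i = (0, u_i; 0, 0) in the last block column, for some elements u_i each either a unit of R or zero. -/
open CategoryTheory MvPowerSeries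

universe u

/-- The matrix `A_l = (y, -z^l; 0, x)` over `R = k[[x,y,z]]/(xy)`, presenting `I_l`. -/
noncomputable def AMat (k : Type u) [Field k] (l : ℕ) : Matrix (Fin 2) (Fin 2) (AInf k) :=
  !![yA k, -(zA k ^ l); 0, xA k]

/-- The block matrix `D(u₁, …, u_r)` with diagonal blocks `A_(l 0), …, A_(l (r-1)), A_1`
and blocks `U_i = (0, u_i; 0, 0)` in the last block column. -/
noncomputable def DMat (k : Type u) [Field k] {r : ℕ} (l : Fin r → ℕ) (u : Fin r → AInf k) :
    Matrix (Fin (r + 1) × Fin 2) (Fin (r + 1) × Fin 2) (AInf k) :=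
  fun p q =>
    if p.1 = q.1 then AMat k (Fin.snoc (α := fun _ => ℕ) l 1 p.1) p.2 q.2
    else if q.1 = Fin.last r then
      if h : (p.1 : ℕ) < r then (if p.2 = 0 ∧ q.2 = 1 then u ⟨p.1, h⟩ else 0) else 0
    else 0

/-!
Lift the generators `x`, `z` of `I_1` to `n₁`, `n₂ ∈ N`. Since the annihilator of `x` is `(y)` and
`y` is a non-zero-divisor modulo `I_l`, the lift `n₁` can be corrected so that `y n₁ = 0`. Then
`x n₂ - z n₁` lies in `⊕ I_(l_i)` and is killed by `y`, so its components are `m_i x`. As `R` is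
local with maximal ideal `(x, y, z)`, `m_i x = (c_i + z s_i + x a_i) x` with `c_i` a unit or zero;
moving the `z`- and `x`-terms into `n₁` and `n₂` leaves `z n₁ - x n₂ = ∑ u_i x e_i` with
`u_i = -c_i`. The horseshoe lemma, applied to the presentations `A_(l_i)` of `I_(l_i)`, `A_1` of
`I_1` and this choice of lifts, presents `N` by `D(u₁, …, u_r)`.
-/
namespace MvPowerSeries

variable {σ R : Type*} [CommRing R]

theorem exists_coeff_sub_X_mul (i : σ) (F : MvPowerSeries σ R) :
    ∃ G, ∀ m, coeff m (F - X i * G) = if m i = 0 then coeff m F else 0 := by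
  let F₀ : MvPowerSeries σ R := fun m => if m i = 0 then coeff m F else 0
  have hF₀ : ∀ m, coeff m F₀ = if m i = 0 then coeff m F else 0 := fun _ => rfl
  obtain ⟨G, hG⟩ : X i ∣ F - F₀ := X_dvd_iff.mpr fun m hm => by simp [hF₀, hm]
  exact ⟨G, fun m => by rw [← hG, sub_sub_cancel, hF₀]⟩

theorem coeff_mul_X_pow_eq_zero {i j : σ} (hij : j ≠ i) (n : ℕ) {F : MvPowerSeries σ R}
    (hF : ∀ m, m i ≠ 0 → coeff m F = 0) {m : σ →₀ ℕ} (hm : m i ≠ 0) :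
    coeff m (F * X j ^ n) = 0 := by
  rw [X_pow_eq, coeff_mul_monomial]
  split_ifs
  · rw [hF _ (by simpa [Finsupp.single_apply, hij] using hm), zero_mul]
  · rfl

theorem eq_zero_of_X_dvd {i : σ} {F : MvPowerSeries σ R} (hdvd : X i ∣ F)
    (hF : ∀ m, m i ≠ 0 → coeff m F = 0) : F = 0 := by
  ext m
  by_cases hm : m i = 0
  exacts [X_dvd_iff.mp hdvd m hm, hF m hm]

theorem X_dvd_of_X_dvd_mul_X_pow {i j : σ} (hij : i ≠ j) (n : ℕ) {F : MvPowerSeries σ R}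
    (h : X i ∣ F * X j ^ n) : X i ∣ F := by
  refine X_dvd_iff.mpr fun m hm => ?_
  rw [← mul_one (coeff m F), ← coeff_add_mul_monomial, ← X_pow_eq]
  exact X_dvd_iff.mp h _ (by simp [hij, hm])

theorem X_mul_left_cancel {i : σ} {F G : MvPowerSeries σ R} (h : X i * F = X i * G) : F = G :=
  (mul_cancel_left_mem_nonZeroDivisors (X_mem_nonzeroDivisors (R := R) (i := i))).mp h

theorem exists_eq_X_mul_add_X_mul_add_X_mul {F : MvPowerSeries (Fin 3) R}
    (hF : constantCoeff F = 0) : ∃ a b c, F = X 0 * a + X 1 * b + X 2 * c := by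
  obtain ⟨a, ha⟩ := exists_coeff_sub_X_mul 0 F
  obtain ⟨b, hb⟩ := exists_coeff_sub_X_mul 1 (F - X 0 * a)
  obtain ⟨c, hc⟩ := exists_coeff_sub_X_mul 2 (F - X 0 * a - X 1 * b)
  refine ⟨a, b, c, eq_of_sub_eq_zero ?_⟩
  ext m
  rw [← sub_sub, ← sub_sub, hc, hb, ha, LinearMap.map_zero]
  split_ifs <;> try rfl
  obtain rfl : m = 0 := by ext i; fin_cases i <;> assumption
  rw [coeff_zero_eq_constantCoeff_apply, hF]

end MvPowerSeries

namespace AInf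

variable {k : Type u} [Field k]

theorem aInfMk_surjective : Function.Surjective (aInfMk k) :=
  Ideal.Quotient.mk_surjective

theorem aInfMk_eq_zero_iff {F : MvPowerSeries (Fin 3) k} :
    aInfMk k F = 0 ↔ ∃ C, F = C * (X 0 * X 1) := by
  rw [Ideal.Quotient.eq_zero_iff_mem, Ideal.mem_span_singleton']
  exact ⟨fun ⟨C, hC⟩ => ⟨C, hC.symm⟩, fun ⟨C, hC⟩ => ⟨C, hC.symm⟩⟩

theorem xA_mul_yA : xA k * yA k = 0 :=
  aInfMk_eq_zero_iff.mpr ⟨1, (one_mul _).symm⟩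

theorem exists_eq_of_mul_xA_add_mul_zA_pow_eq_zero (l : ℕ) {a b : AInf k}
    (h : a * xA k + b * zA k ^ l = 0) : ∃ s t, a = s * yA k - t * zA k ^ l ∧ b = t * xA k := by
  obtain ⟨A, rfl⟩ := aInfMk_surjective a
  obtain ⟨B, rfl⟩ := aInfMk_surjective b
  obtain ⟨C, hC⟩ := aInfMk_eq_zero_iff.mp (show aInfMk k (A * X 0 + B * X 2 ^ l) = 0 by
    rw [map_add, map_mul, map_mul, map_pow]; exact h)
  obtain ⟨T, hT⟩ := X_dvd_of_X_dvd_mul_X_pow (i := 0) (j := 2) (by decide) l (F := B)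
    ⟨C * X 1 - A, by linear_combination hC⟩
  have hA : A = C * X 1 - T * X 2 ^ l :=
    X_mul_left_cancel (i := 0) (by linear_combination hC - X 2 ^ l * hT)
  refine ⟨aInfMk k C, aInfMk k T, ?_, ?_⟩
  · rw [hA]; simp only [map_sub, map_mul, map_pow]
  · rw [hT, map_mul, mul_comm]

theorem exists_eq_mul_yA_of_xA_mul_eq_zero {q : AInf k} (h : xA k * q = 0) :
    ∃ m, q = m * yA k := by
  obtain ⟨Q, rfl⟩ := aInfMk_surjective q
  obtain ⟨C, hC⟩ := aInfMk_eq_zero_iff.mp (show aInfMk k (X 0 * Q) = 0 by rw [map_mul]; exact h)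
  exact ⟨aInfMk k C, by
    rw [X_mul_left_cancel (i := 0) (F := Q) (G := C * X 1) (by linear_combination hC), map_mul]⟩

theorem exists_eq_mul_xA_of_yA_mul_eq_zero {q : AInf k} (h : yA k * q = 0) :
    ∃ m, q = m * xA k := by
  obtain ⟨Q, rfl⟩ := aInfMk_surjective q
  obtain ⟨C, hC⟩ := aInfMk_eq_zero_iff.mp (show aInfMk k (X 1 * Q) = 0 by rw [map_mul]; exact h)
  exact ⟨aInfMk k C, by
    rw [X_mul_left_cancel (i := 1) (F := Q) (G := C * X 0) (by linear_combination hC), map_mul]⟩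

theorem mem_IIdeal_of_yA_mul_mem (l : ℕ) {m : AInf k} (h : yA k * m ∈ IIdeal k l) :
    m ∈ IIdeal k l := by
  obtain ⟨a, b, hab⟩ := Submodule.mem_span_pair.mp h
  obtain ⟨A, rfl⟩ := aInfMk_surjective a
  obtain ⟨B, rfl⟩ := aInfMk_surjective b
  obtain ⟨M, rfl⟩ := aInfMk_surjective m
  obtain ⟨C, hC⟩ := aInfMk_eq_zero_iff.mp
    (show aInfMk k (M * X 1 - A * X 0 - B * X 2 ^ l) = 0 by
      simp only [smul_eq_mul] at hab
      simp only [map_sub, map_mul, map_pow]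
      linear_combination -hab)
  obtain ⟨M₁, hM₁⟩ := exists_coeff_sub_X_mul 0 M
  obtain ⟨B₁, hB₁⟩ := exists_coeff_sub_X_mul 0 B
  -- `M₀ = M - x M₁` and `B₀ = B - x B₁` are free of `x`, hence so is `M₀ y - B₀ z ^ l`; being
  -- also a multiple of `x`, it vanishes
  have hrel : (M - X 0 * M₁) * X 1 ^ 1 = (B - X 0 * B₁) * X 2 ^ l := by
    refine eq_of_sub_eq_zero (eq_zero_of_X_dvd (i := 0)
      ⟨A + C * X 1 - M₁ * X 1 + B₁ * X 2 ^ l, by linear_combination hC⟩ fun n hn => ?_)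
    rw [map_sub, coeff_mul_X_pow_eq_zero (by decide) _ (fun n hn => by simp [hM₁, hn]) hn,
      coeff_mul_X_pow_eq_zero (by decide) _ (fun n hn => by simp [hB₁, hn]) hn, sub_zero]
  obtain ⟨T, hT⟩ := X_dvd_of_X_dvd_mul_X_pow (i := 1) (j := 2) (by decide) l
    ⟨M - X 0 * M₁, by rw [← hrel]; ring⟩
  have hM : M = X 0 * M₁ + T * X 2 ^ l :=
    eq_add_of_sub_eq' (X_mul_left_cancel (i := 1) (G := T * X 2 ^ l)
      (by linear_combination hrel + X 2 ^ l * hT))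
  rw [hM, map_add, map_mul, map_mul, map_pow]
  exact Ideal.add_mem _ (Ideal.mul_mem_right _ _ (Ideal.subset_span (by simp)))
    (Ideal.mul_mem_left _ _ (Ideal.subset_span (by simp)))

theorem isUnit_or_exists_eq_add (c : AInf k) :
    IsUnit c ∨ ∃ α β ζ, c = α * xA k + β * yA k + ζ * zA k := by
  obtain ⟨C, rfl⟩ := aInfMk_surjective c
  by_cases hC : constantCoeff C = 0
  · obtain ⟨a, b, c, rfl⟩ := exists_eq_X_mul_add_X_mul_add_X_mul hC
    exact Or.inr ⟨aInfMk k a, aInfMk k b, aInfMk k c, by simp only [map_add, map_mul]; ring⟩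
  · exact Or.inl ((isUnit_iff_constantCoeff.mpr (isUnit_iff_ne_zero.mpr hC)).map _)

theorem exists_mul_xA_eq (m : AInf k) : ∃ c s a, (IsUnit c ∨ c = 0) ∧
    m * xA k = (c + zA k * s + xA k * a) * xA k := by
  rcases isUnit_or_exists_eq_add m with hm | ⟨α, β, ζ, rfl⟩
  · exact ⟨m, 0, 0, Or.inl hm, by ring⟩
  · exact ⟨0, ζ, α, Or.inr rfl, by linear_combination β * xA_mul_yA (k := k)⟩

end AInf

open Matrix in
theorem AMat_mulVec {k : Type u} [Field k] (l : ℕ) (v : Fin 2 → AInf k) :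
    AMat k l *ᵥ v = ![yA k * v 0 - zA k ^ l * v 1, xA k * v 1] := by
  ext i
  fin_cases i <;> simp [AMat, mulVec, dotProduct, Fin.sum_univ_two]
  ring

namespace IIdeal

open AInf Matrix

variable (k : Type u) [Field k] (l : ℕ)

noncomputable def xGen : IIdeal k l := ⟨xA k, Ideal.subset_span (by simp)⟩

noncomputable def zGen : IIdeal k l := ⟨zA k ^ l, Ideal.subset_span (by simp)⟩

noncomputable def π : (Fin 2 → AInf k) →ₗ[AInf k] IIdeal k l :=
  Fintype.linearCombination (AInf k) ![xGen k l, zGen k l]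

variable {k l}

theorem π_apply (v : Fin 2 → AInf k) : π k l v = v 0 • xGen k l + v 1 • zGen k l := by
  simp [π, Fintype.linearCombination_apply, Fin.sum_univ_two]

theorem coe_π_apply (v : Fin 2 → AInf k) : (π k l v : AInf k) = v 0 * xA k + v 1 * zA k ^ l := by
  simp [π_apply, xGen, zGen]

theorem yA_smul_xGen : yA k • xGen k l = 0 :=
  Subtype.ext (by simp [xGen, mul_comm, xA_mul_yA])

theorem π_surjective : Function.Surjective (π k l) := by
  rintro ⟨p, hp⟩
  obtain ⟨a, b, rfl⟩ := Submodule.mem_span_pair.mp hp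
  exact ⟨![a, b], Subtype.ext (by simp [coe_π_apply])⟩

theorem exact_toLin'_AMat_π : Function.Exact (Matrix.toLin' (AMat k l)) (π k l) := by
  intro v
  rw [← Subtype.coe_inj, coe_π_apply, ZeroMemClass.coe_zero]
  constructor
  · intro h
    obtain ⟨s, t, hs, ht⟩ := exists_eq_of_mul_xA_add_mul_zA_pow_eq_zero l h
    refine ⟨![s, t], ?_⟩
    rw [toLin'_apply, AMat_mulVec l]
    ext i
    fin_cases i <;> simp [hs, ht, mul_comm]
  · rintro ⟨c, rfl⟩
    rw [toLin'_apply, AMat_mulVec l]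
    simp only [cons_val_zero, cons_val_one]
    linear_combination c 0 * xA_mul_yA (k := k)

theorem exists_eq_yA_smul_of_xA_smul_eq_zero {p : IIdeal k l} (h : xA k • p = 0) :
    ∃ q : IIdeal k l, p = yA k • q := by
  obtain ⟨m, hm⟩ := exists_eq_mul_yA_of_xA_mul_eq_zero (congrArg Subtype.val h)
  have hm' : m ∈ IIdeal k l :=
    mem_IIdeal_of_yA_mul_mem l (by rw [mul_comm (yA k) m, ← hm]; exact p.2)
  exact ⟨⟨m, hm'⟩, Subtype.ext (by simp [hm, mul_comm])⟩

theorem exists_eq_smul_xGen_of_yA_smul_eq_zero {p : IIdeal k l} (h : yA k • p = 0) :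
    ∃ c s a, (IsUnit c ∨ c = 0) ∧ p = (c + zA k * s + xA k * a) • xGen k l := by
  obtain ⟨m, hm⟩ := exists_eq_mul_xA_of_yA_mul_eq_zero (congrArg Subtype.val h)
  obtain ⟨c, s, a, hc, hca⟩ := exists_mul_xA_eq m
  exact ⟨c, s, a, hc, Subtype.ext (by simp [xGen, hm, hca])⟩

end IIdeal

section Extension

open AInf IIdeal

variable {k : Type u} [Field k] {r : ℕ} {l : Fin r → ℕ} {N : Type u} [AddCommGroup N]
  [Module (AInf k) N] {f : (∀ i : Fin r, IIdeal k (l i)) →ₗ[AInf k] N} {g : N →ₗ[AInf k] IIdeal k 1}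

theorem exists_lift_xGen_yA_smul_eq_zero (hinj : Function.Injective f)
    (hex : Function.Exact f g) (hsurj : Function.Surjective g) :
    ∃ n, g n = xGen k 1 ∧ yA k • n = 0 := by
  obtain ⟨n, hn⟩ := hsurj (xGen k 1)
  obtain ⟨p, hp⟩ := (hex (yA k • n)).mp (by rw [map_smul, hn, yA_smul_xGen])
  have hxp : xA k • p = 0 :=
    hinj (by rw [map_smul, hp, smul_smul, xA_mul_yA, map_zero]; exact zero_smul (AInf k) n)
  choose α hα using fun i => exists_eq_yA_smul_of_xA_smul_eq_zero (congrFun hxp i)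
  have hpα : p = yA k • α := funext hα
  refine ⟨n - f α, by rw [map_sub, hn, hex.apply_apply_eq_zero, sub_zero], ?_⟩
  rw [smul_sub, ← map_smul, ← hpα, hp, sub_self]

theorem exists_normalized_lifts (hinj : Function.Injective f) (hex : Function.Exact f g)
    (hsurj : Function.Surjective g) :
    ∃ (n₁ n₂ : N) (u : Fin r → AInf k), (∀ i, IsUnit (u i) ∨ u i = 0) ∧
      g n₁ = xGen k 1 ∧ g n₂ = zGen k 1 ∧ yA k • n₁ = 0 ∧
      zA k • n₁ - xA k • n₂ = f (fun i => u i • xGen k (l i)) := by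
  obtain ⟨n₁, hn₁, hyn₁⟩ := exists_lift_xGen_yA_smul_eq_zero hinj hex hsurj
  obtain ⟨n₂, hn₂⟩ := hsurj (zGen k 1)
  obtain ⟨q, hq⟩ := (hex (xA k • n₂ - zA k • n₁)).mp (by
    rw [map_sub, map_smul, map_smul, hn₁, hn₂]
    exact Subtype.ext (by simp [xGen, zGen, mul_comm]))
  have hyq : yA k • q = 0 := hinj (by
    rw [map_smul, hq, smul_sub, smul_smul, smul_smul, mul_comm (yA k) (xA k), xA_mul_yA,
      mul_comm (yA k) (zA k), ← smul_smul, hyn₁, smul_zero, sub_zero, map_zero]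
    exact zero_smul (AInf k) n₂)
  choose c s a hc hq' using fun i => exists_eq_smul_xGen_of_yA_smul_eq_zero (congrFun hyq i)
  -- the `z`- and `x`-parts of `q` are absorbed into the lifts `n₁` and `n₂`
  set S : ∀ i, IIdeal k (l i) := fun i => s i • xGen k (l i)
  set A : ∀ i, IIdeal k (l i) := fun i => a i • xGen k (l i)
  have hqSA : q = (fun i => c i • xGen k (l i)) + zA k • S + xA k • A :=
    funext fun i => by simp [hq' i, S, A, add_smul, mul_smul]
  have hyS : yA k • S = 0 := funext fun i => by simp [S, smul_comm (yA k), yA_smul_xGen]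
  refine ⟨n₁ + f S, n₂ - f A, -c, fun i => (hc i).imp (fun h => h.neg) (fun h => by simp [h]),
    by rw [map_add, hn₁, hex.apply_apply_eq_zero, add_zero],
    by rw [map_sub, hn₂, hex.apply_apply_eq_zero, sub_zero],
    by rw [smul_add, hyn₁, ← map_smul, hyS, map_zero, add_zero], ?_⟩
  have hneg : (fun i => (-c) i • xGen k (l i)) = -fun i => c i • xGen k (l i) :=
    funext fun i => neg_smul (c i) (xGen k (l i))
  have hC : f (fun i => c i • xGen k (l i)) = xA k • n₂ - zA k • n₁ - zA k • f S - xA k • f A := by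
    rw [← hq, hqSA, map_add, map_add, map_smul, map_smul]
    abel
  rw [hneg, map_neg, hC, smul_add, smul_sub]
  abel

end Extension

section Horseshoe

variable {R : Type*} [CommRing R] {M' N M F' F G' G : Type*}
  [AddCommGroup M'] [AddCommGroup N] [AddCommGroup M] [AddCommGroup F'] [AddCommGroup F]
  [AddCommGroup G'] [AddCommGroup G] [Module R M'] [Module R N] [Module R M] [Module R F']
  [Module R F] [Module R G'] [Module R G]
  {f : M' →ₗ[R] N} {g : N →ₗ[R] M} {p' : F' →ₗ[R] M'} {d' : G' →ₗ[R] F'} {p : F →ₗ[R] M}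
  {d : G →ₗ[R] F} {ψ : F →ₗ[R] N} {e : G →ₗ[R] F'}

theorem horseshoe_surjective (hfg : Function.Exact f g) (hp' : Function.Surjective p')
    (hp : Function.Surjective p) (hψ : g ∘ₗ ψ = p) :
    Function.Surjective ((f ∘ₗ p').coprod ψ) := by
  intro n
  obtain ⟨a, ha⟩ := hp (g n)
  obtain ⟨m', hm'⟩ := (hfg (n - ψ a)).mp (by rw [map_sub, ← LinearMap.comp_apply, hψ, ha, sub_self])
  obtain ⟨a', rfl⟩ := hp' m'
  exact ⟨(a', a), by simp [hm']⟩

theorem horseshoe_exact (hf : Function.Injective f) (hfg : Function.Exact f g)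
    (hd' : Function.Exact d' p') (hd : Function.Exact d p) (hψ : g ∘ₗ ψ = p)
    (he : f ∘ₗ p' ∘ₗ e + ψ ∘ₗ d = 0) :
    Function.Exact ((d'.coprod e).prod (d ∘ₗ LinearMap.snd R G' G)) ((f ∘ₗ p').coprod ψ) := by
  have he' (c : G) : ψ (d c) = -f (p' (e c)) :=
    eq_neg_of_add_eq_zero_right (LinearMap.congr_fun he c)
  rintro ⟨a', a⟩
  simp only [LinearMap.coprod_apply, LinearMap.comp_apply, Set.mem_range, LinearMap.prod_apply,
    Function.prod, LinearMap.snd_apply, Prod.mk.injEq, Prod.exists]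
  constructor
  · intro h
    have hpa : p a = 0 := by
      have := congrArg g h
      rwa [map_add, hfg.apply_apply_eq_zero, zero_add, ← LinearMap.comp_apply, hψ,
        map_zero] at this
    obtain ⟨c, rfl⟩ := (hd a).mp hpa
    rw [he', ← sub_eq_add_neg] at h
    obtain ⟨c', hc'⟩ := (hd' (a' - e c)).mp (hf (by rw [map_sub, map_sub, h, map_zero]))
    exact ⟨c', c, by rw [hc', sub_add_cancel], rfl⟩
  · rintro ⟨c', c, rfl, rfl⟩
    rw [map_add, map_add, hd'.apply_apply_eq_zero, map_zero, zero_add, he', add_neg_cancel]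

end Horseshoe

theorem LinearMap.exact_piMap {R ι : Type*} [Semiring R] {M N P : ι → Type*}
    [∀ i, AddCommMonoid (M i)] [∀ i, AddCommMonoid (N i)] [∀ i, AddCommMonoid (P i)]
    [∀ i, Module R (M i)] [∀ i, Module R (N i)] [∀ i, Module R (P i)]
    {f : ∀ i, M i →ₗ[R] N i} {g : ∀ i, N i →ₗ[R] P i} (h : ∀ i, Function.Exact (f i) (g i)) :
    Function.Exact (LinearMap.piMap f) (LinearMap.piMap g) := by
  intro y
  constructor
  · intro hy
    choose x hx using fun i => (h i (y i)).mp (congrFun hy i)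
    exact ⟨x, funext hx⟩
  · rintro ⟨x, rfl⟩
    exact funext fun i => (h i).apply_apply_eq_zero (x i)

theorem Fintype.linearCombination_apply_fin_two {R M : Type*} [Semiring R] [AddCommMonoid M]
    [Module R M] (n₁ n₂ : M) (v : Fin 2 → R) :
    Fintype.linearCombination R ![n₁, n₂] v = v 0 • n₁ + v 1 • n₂ := by
  simp [Fintype.linearCombination_apply, Fin.sum_univ_two]

noncomputable def LinearEquiv.finSuccProdPi (R M ι : Type*) [Semiring R] [AddCommMonoid M]
    [Module R M] (r : ℕ) : (Fin (r + 1) × ι → M) ≃ₗ[R] (Fin r → ι → M) × (ι → M) where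
  toFun v := (fun i s => v (i.castSucc, s), fun s => v (Fin.last r, s))
  invFun w p := Fin.lastCases (motive := fun _ => ι → M) w.2 w.1 p.1 p.2
  map_add' _ _ := rfl
  map_smul' _ _ := rfl
  left_inv v := by
    funext ⟨i, s⟩
    induction i using Fin.lastCases <;> simp
  right_inv w := by ext <;> simp

section BlockMatrix

open Matrix

variable {k : Type u} [Field k] {r : ℕ} (l : Fin r → ℕ) (u : Fin r → AInf k)

theorem DMat_castSucc_castSucc (i j : Fin r) (s t : Fin 2) :
    DMat k l u (i.castSucc, s) (j.castSucc, t) = if i = j then AMat k (l i) s t else 0 := by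
  by_cases hij : i = j
  · subst hij; simp [DMat]
  · simp [DMat, hij, (Fin.castSucc_lt_last j).ne]

theorem DMat_castSucc_last (i : Fin r) (s t : Fin 2) :
    DMat k l u (i.castSucc, s) (Fin.last r, t) = !![0, u i; 0, 0] s t := by
  fin_cases s <;> fin_cases t <;> simp [DMat, (Fin.castSucc_lt_last i).ne]

theorem DMat_last_castSucc (j : Fin r) (s t : Fin 2) :
    DMat k l u (Fin.last r, s) (j.castSucc, t) = 0 := by
  simp [DMat, (Fin.castSucc_lt_last j).ne', (Fin.castSucc_lt_last j).ne]

theorem DMat_last_last (s t : Fin 2) :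
    DMat k l u (Fin.last r, s) (Fin.last r, t) = AMat k 1 s t := by
  simp [DMat]

theorem finSuccProdPi_DMat_mulVec (c : Fin (r + 1) × Fin 2 → AInf k) :
    LinearEquiv.finSuccProdPi (AInf k) (AInf k) (Fin 2) r (DMat k l u *ᵥ c) =
      let w := LinearEquiv.finSuccProdPi (AInf k) (AInf k) (Fin 2) r c
      (fun i => AMat k (l i) *ᵥ w.1 i + !![0, u i; 0, 0] *ᵥ w.2, AMat k 1 *ᵥ w.2) := by
  refine Prod.ext (funext fun i => funext fun s => ?_) (funext fun s => ?_) <;> fin_cases s <;>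
  simp [LinearEquiv.finSuccProdPi, mulVec, dotProduct, Fintype.sum_prod_type,
    Fin.sum_univ_castSucc, Finset.sum_add_distrib, add_assoc, DMat_castSucc_castSucc,
    DMat_castSucc_last, DMat_last_castSucc, DMat_last_last]

end BlockMatrix

section Presentation

open AInf IIdeal Matrix

variable {k : Type u} [Field k] {r : ℕ} {l : Fin r → ℕ} {N : Type u} [AddCommGroup N]
  [Module (AInf k) N] {f : (∀ i : Fin r, IIdeal k (l i)) →ₗ[AInf k] N} {g : N →ₗ[AInf k] IIdeal k 1}

theorem map_lastBlockColumn_eq_zero {n₁ n₂ : N} {u : Fin r → AInf k} (hy : yA k • n₁ = 0)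
    (hrel : zA k • n₁ - xA k • n₂ = f (fun i => u i • xGen k (l i))) :
    f ∘ₗ LinearMap.piMap (fun i => π k (l i)) ∘ₗ LinearMap.pi (fun i => toLin' !![0, u i; 0, 0]) +
      Fintype.linearCombination (AInf k) ![n₁, n₂] ∘ₗ toLin' (AMat k 1) = 0 := by
  refine LinearMap.ext fun w => ?_
  have hU : (fun i => π k (l i) (!![0, u i; 0, 0] *ᵥ w)) = w 1 • fun i => u i • xGen k (l i) :=
    funext fun i => Subtype.ext (by simp [coe_π_apply, dotProduct, xGen]; ring)
  change f (fun i => π k (l i) (!![0, u i; 0, 0] *ᵥ w)) +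
    Fintype.linearCombination (AInf k) ![n₁, n₂] (AMat k 1 *ᵥ w) = 0
  rw [hU, map_smul, ← hrel, Fintype.linearCombination_apply_fin_two, AMat_mulVec 1]
  simp only [cons_val_zero, cons_val_one, pow_one]
  rw [sub_smul, mul_comm (yA k), mul_smul, hy, smul_zero, zero_sub, mul_smul, mul_smul, smul_sub,
    smul_comm (w 1) (zA k), smul_comm (w 1) (xA k)]
  abel

theorem nonempty_linearEquiv_quotient_range_DMat (hinj : Function.Injective f)
    (hex : Function.Exact f g) {n₁ n₂ : N} {u : Fin r → AInf k} (h₁ : g n₁ = xGen k 1)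
    (h₂ : g n₂ = zGen k 1) (hy : yA k • n₁ = 0)
    (hrel : zA k • n₁ - xA k • n₂ = f (fun i => u i • xGen k (l i))) :
    Nonempty (N ≃ₗ[AInf k]
      ((Fin (r + 1) × Fin 2 → AInf k) ⧸ LinearMap.range (toLin' (DMat k l u)))) := by
  let ψ := Fintype.linearCombination (AInf k) ![n₁, n₂]
  let e : (Fin 2 → AInf k) →ₗ[AInf k] (Fin r → Fin 2 → AInf k) :=
    LinearMap.pi fun i => toLin' !![0, u i; 0, 0]
  have hψ : g ∘ₗ ψ = π k 1 := LinearMap.ext fun v => by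
    rw [LinearMap.comp_apply, Fintype.linearCombination_apply_fin_two, map_add, map_smul,
      map_smul, h₁, h₂, π_apply]
  have hexact := horseshoe_exact hinj hex (LinearMap.exact_piMap fun i => exact_toLin'_AMat_π)
    exact_toLin'_AMat_π hψ (map_lastBlockColumn_eq_zero hy hrel)
  have hp' : Function.Surjective (LinearMap.piMap fun i => π k (l i)) :=
    Function.Surjective.piMap fun i => π_surjective
  have hsurj := horseshoe_surjective hex hp' π_surjective hψ
  let σ := LinearEquiv.finSuccProdPi (AInf k) (AInf k) (Fin 2) r
  have hrange : (LinearMap.range (toLin' (DMat k l u))).map σ.toLinearMap = LinearMap.range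
      (((LinearMap.piMap fun i => toLin' (AMat k (l i))).coprod e).prod
        (toLin' (AMat k 1) ∘ₗ LinearMap.snd _ _ _)) := by
    rw [← LinearMap.range_comp, ← LinearMap.range_comp_of_range_eq_top _ σ.range]
    exact congrArg LinearMap.range (LinearMap.ext (finSuccProdPi_DMat_mulVec l u))
  exact ⟨(hexact.linearEquivOfSurjective hsurj).symm ≪≫ₗ
    (Submodule.Quotient.equiv _ _ σ hrange).symm⟩

end Presentation

theorem aInf_extension_matrix_general (k : Type u) [Field k] (r : ℕ) (l : Fin r → ℕ)
    (N : Type u) [AddCommGroup N] [Module (AInf k) N]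
    (f : (∀ i : Fin r, IIdeal k (l i)) →ₗ[AInf k] N)
    (g : N →ₗ[AInf k] IIdeal k 1)
    (hinj : Function.Injective f) (hex : Function.Exact f g)
    (hsurj : Function.Surjective g) :
    ∃ u : Fin r → AInf k, (∀ i, IsUnit (u i) ∨ u i = 0) ∧
      Nonempty (N ≃ₗ[AInf k]
        ((Fin (r + 1) × Fin 2 → AInf k) ⧸
          LinearMap.range (Matrix.toLin' (DMat k l u)))) := by
  obtain ⟨n₁, n₂, u, hu, h₁, h₂, hy, hrel⟩ := exists_normalized_lifts hinj hex hsurj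
  exact ⟨u, hu, nonempty_linearEquiv_quotient_range_DMat hinj hex h₁ h₂ hy hrel⟩

/-- Claim 4.3(1) ((a)⇒(b)): if `0 → I_(l 0) ⊕ ⋯ ⊕ I_(l (r-1)) → N → I_1 → 0` is exact,
then `N` is the cokernel of `D(u₁, …, u_r)` for some `u_i` each a unit or zero. -/
theorem aInf_extension_matrix (k : Type u) [Field k] (r : ℕ) (l : Fin r → ℕ)
    (hl : ∀ i, 1 ≤ l i)
    (N : Type u) [AddCommGroup N] [Module (AInf k) N]
    (f : (∀ i : Fin r, IIdeal k (l i)) →ₗ[AInf k] N)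
    (g : N →ₗ[AInf k] IIdeal k 1)
    (hinj : Function.Injective f) (hex : Function.Exact f g)
    (hsurj : Function.Surjective g) :
    ∃ u : Fin r → AInf k, (∀ i, IsUnit (u i) ∨ u i = 0) ∧
      Nonempty (N ≃ₗ[AInf k]
        ((Fin (r + 1) × Fin 2 → AInf k) ⧸
          LinearMap.range (Matrix.toLin' (DMat k l u)))) :=
  aInf_extension_matrix_general k r l N f g hinj hex hsurj
end
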